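/- Let ψ : ℝ → ℂ be integrable with Fourier integral 𝓕ψ(ξ) = ∫ ψ(s)·exp(−2πi ξ s) ds, and let f₁, f₂ > 0 satisfy 𝓕ψ(−f₁) = 𝓕ψ(−f₂) = 0. Let a₁, a₂, φ₁, φ₂ be real and set y(t) = a₁cos(2πf₁t + φ₁) + a₂cos(2πf₂t + φ₂). Then for every real t, |(y ⋆ ψ)(t)|² = (1/4)|𝓕ψ(f₁)|²·a₁² + (1/4)|𝓕ψ(f₂)|²·a₂² + (1/2)·a₁a₂·Re( 𝓕ψ(f₁)·conj(𝓕ψ(f₂))·exp(i(2π(f₁−f₂)t + (φ₁−φ₂))) ), where (y ⋆ ψ)(t) = ∫ y(s)·ψ(t−s) ds. In particular, the time-varying part of the squared scalogram is a difference tone of frequency |f₂ − f₁|, with amplitude proportional to the product a₁a₂. -/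

import Mathlib

open Complex MeasureTheory Real

open scoped ComplexConjugate

/-!
Write each cosine as the average of the tones `exp(±i(2πfs + φ))`. Convolving a tone with `ψ`
multiplies it by `𝓕ψ` at the tone's frequency, so the analyticity hypothesis kills the
negative-frequency tones and the convolution is `a₁/2 · e₁ 𝓕ψ(f₁) + a₂/2 · e₂ 𝓕ψ(f₂)` with
`|e₁| = |e₂| = 1`; expanding its squared modulus leaves the cross term `e₁ conj e₂`, a tone at
frequency `f₁ - f₂`.
-/

noncomputable def tone (f φ s : ℝ) : ℂ := cexp (((2 * π * f * s + φ : ℝ) : ℂ) * I)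

lemma normSq_tone (f φ s : ℝ) : normSq (tone f φ s) = 1 := by
  rw [tone, normSq_eq_norm_sq, norm_exp_ofReal_mul_I, one_pow]

lemma tone_neg (f φ s : ℝ) : tone (-f) (-φ) s = conj (tone f φ s) := by
  rw [tone, tone, ← exp_conj, map_mul, conj_ofReal, conj_I]
  congr 1; push_cast; ring

lemma tone_mul_conj_tone (f₁ f₂ φ₁ φ₂ s : ℝ) :
    tone f₁ φ₁ s * conj (tone f₂ φ₂ s) = tone (f₁ - f₂) (φ₁ - φ₂) s := by
  rw [← tone_neg, tone, tone, tone, ← Complex.exp_add]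
  congr 1; push_cast; ring

lemma ofReal_cos_eq_tone_add_tone (f φ s : ℝ) :
    (Real.cos (2 * π * f * s + φ) : ℂ) = (tone f φ s + tone (-f) (-φ) s) / 2 := by
  rw [tone_neg, add_conj, tone, exp_ofReal_mul_I_re]; push_cast; ring

variable {ψ : ℝ → ℂ}

lemma integrable_tone_mul_comp_sub (hψ : Integrable ψ) (f φ t : ℝ) :
    Integrable (fun s => tone f φ s * ψ (t - s)) :=
  (hψ.comp_sub_left t).bdd_mul (c := 1) (by unfold tone; fun_prop :
    Continuous (tone f φ)).aestronglyMeasurable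
    (.of_forall fun s => by rw [tone, norm_exp_ofReal_mul_I])

lemma integral_tone_mul_comp_sub (f φ t : ℝ) :
    ∫ s, tone f φ s * ψ (t - s) =
      tone f φ t * ∫ s, ψ s * cexp (-((2 * π * f * s : ℝ) : ℂ) * I) := by
  rw [← integral_const_mul, ← integral_sub_left_eq_self _ volume t]
  congr 1; ext s
  rw [sub_sub_cancel, tone, tone, mul_comm _ (ψ s), mul_left_comm _ (ψ s), ← Complex.exp_add]
  congr 2; push_cast; ring

lemma integrable_ofReal_mul_cos_mul_comp_sub (hψ : Integrable ψ) (a f φ t : ℝ) :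
    Integrable (fun s => ((a * Real.cos (2 * π * f * s + φ) : ℝ) : ℂ) * ψ (t - s)) :=
  (hψ.comp_sub_left t).bdd_mul (c := |a|) (by fun_prop)
    (.of_forall fun s => by
      rw [norm_real, Real.norm_eq_abs, abs_mul]
      exact mul_le_of_le_one_right (abs_nonneg a) (abs_cos_le_one _))

lemma integral_ofReal_mul_cos_mul_comp_sub (hψ : Integrable ψ) (a f φ t : ℝ) :
    ∫ s, ((a * Real.cos (2 * π * f * s + φ) : ℝ) : ℂ) * ψ (t - s) =
      a / 2 * (tone f φ t * ∫ s, ψ s * cexp (-((2 * π * f * s : ℝ) : ℂ) * I)) +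
      a / 2 * (tone (-f) (-φ) t * ∫ s, ψ s * cexp (-((2 * π * (-f) * s : ℝ) : ℂ) * I)) := by
  have hsplit : ∀ s, ((a * Real.cos (2 * π * f * s + φ) : ℝ) : ℂ) * ψ (t - s) =
      a / 2 * (tone f φ s * ψ (t - s)) + a / 2 * (tone (-f) (-φ) s * ψ (t - s)) := fun s => by
    rw [ofReal_mul, ofReal_cos_eq_tone_add_tone]; ring
  simp_rw [hsplit]
  rw [integral_add ((integrable_tone_mul_comp_sub hψ f φ t).const_mul _)
      ((integrable_tone_mul_comp_sub hψ (-f) (-φ) t).const_mul _),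
    integral_const_mul, integral_const_mul, integral_tone_mul_comp_sub,
    integral_tone_mul_comp_sub]

lemma normSq_add_tones (a₁ a₂ f₁ f₂ φ₁ φ₂ t : ℝ) (z₁ z₂ : ℂ) :
    normSq (a₁ / 2 * (tone f₁ φ₁ t * z₁) + a₂ / 2 * (tone f₂ φ₂ t * z₂)) =
      1 / 4 * normSq z₁ * a₁ ^ 2 + 1 / 4 * normSq z₂ * a₂ ^ 2 +
        1 / 2 * a₁ * a₂ * (z₁ * conj z₂ * tone (f₁ - f₂) (φ₁ - φ₂) t).re := by
  have hcross : a₁ / 2 * (tone f₁ φ₁ t * z₁) * conj (a₂ / 2 * (tone f₂ φ₂ t * z₂)) =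
      ((a₁ * a₂ / 4 : ℝ) : ℂ) * (z₁ * conj z₂ * tone (f₁ - f₂) (φ₁ - φ₂) t) := by
    rw [← tone_mul_conj_tone]
    simp only [map_mul, map_div₀, conj_ofReal, map_ofNat]
    push_cast; ring
  simp only [normSq_add, hcross, re_ofReal_mul, normSq_mul, normSq_div, normSq_ofReal,
    normSq_tone, normSq_ofNat]
  ring

theorem sq_scalogram_two_tones
    (ψ : ℝ → ℂ) (hψ : Integrable ψ)
    (F : ℝ → ℂ)
    (hF : ∀ ξ : ℝ, F ξ = ∫ s : ℝ, ψ s * Complex.exp (-(((2 * π * ξ * s : ℝ)) : ℂ) * Complex.I))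
    (f₁ f₂ : ℝ)
    (hanalytic₁ : F (-f₁) = 0) (hanalytic₂ : F (-f₂) = 0)
    (a₁ a₂ φ₁ φ₂ : ℝ) (y : ℝ → ℝ)
    (hy : ∀ t : ℝ, y t = a₁ * Real.cos (2 * π * f₁ * t + φ₁)
                        + a₂ * Real.cos (2 * π * f₂ * t + φ₂))
    (t : ℝ) :
    Complex.normSq (∫ s : ℝ, (y s : ℂ) * ψ (t - s))
      = (1 / 4) * Complex.normSq (F f₁) * a₁ ^ 2
        + (1 / 4) * Complex.normSq (F f₂) * a₂ ^ 2
        + (1 / 2) * a₁ * a₂ *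
            (F f₁ * (starRingEnd ℂ) (F f₂) *
              Complex.exp (((2 * π * (f₁ - f₂) * t + (φ₁ - φ₂) : ℝ) : ℂ) * Complex.I)).re := by
  have hconv : ∫ s, (y s : ℂ) * ψ (t - s) =
      a₁ / 2 * (tone f₁ φ₁ t * F f₁) + a₂ / 2 * (tone f₂ φ₂ t * F f₂) := by
    simp only [hy, ofReal_add, add_mul]
    rw [integral_add (integrable_ofReal_mul_cos_mul_comp_sub hψ a₁ f₁ φ₁ t)
        (integrable_ofReal_mul_cos_mul_comp_sub hψ a₂ f₂ φ₂ t),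
      integral_ofReal_mul_cos_mul_comp_sub hψ, integral_ofReal_mul_cos_mul_comp_sub hψ,
      ← hF, ← hF, ← hF, ← hF, hanalytic₁, hanalytic₂]
    ring
  rw [hconv, normSq_add_tones, tone]
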